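/- arXiv:math/0004155 — 4 statements merged into one kernel-verified Lean document; each statement's English description precedes it below -/
import Mathlib

section
/- Product-to-sum formula: for all integers p, q, r, s, the doubled noncommutative cosines satisfy C(p,q)·C(r,s) = t^(ps−qr)·C(p+r, q+s) + t^(qr−ps)·C(p−r, q−s). (Under the identification of the Kauffman bracket skein algebra of the torus with the algebra of noncommutative cosines, where the skein (p,q)_T corresponds to C(p,q), this is the product-to-sum formula (p,q)_T∗(r,s)_T = t^(ps−qr)(p+r,q+s)_T + t^(−(ps−qr))(p−r,q−s)_T used throughout the paper.) -/
/-!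
Conjugation by `l` multiplies `m` by the central scalar `t²`, so `l^p m^q = t^(2pq) m^q l^p` and
hence `e(p,q) e(r,s) = t^(ps-qr) e(p+r,q+s)`. Expanding `C(p,q) C(r,s)` gives four such products,
which pair up into the two cosines.
-/

section Group

variable {G : Type*} [Group G] {a b c : G}

theorem zpow_mul_zpow_of_mul_eq_mul_mul (hca : Commute c a) (hcb : Commute c b)
    (h : a * b = c * b * a) (p q : ℤ) : a ^ p * b ^ q = c ^ (p * q) * b ^ q * a ^ p := by
  have hb : SemiconjBy b (c * a) a := by
    rw [SemiconjBy, ← mul_assoc, ← hcb.eq, h]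
  have hap : SemiconjBy (a ^ p) b (c ^ p * b) := by
    have := hb.zpow_right p
    rw [SemiconjBy, hca.mul_zpow] at this
    rw [SemiconjBy, ← this, ← mul_assoc, (hcb.zpow_left p).eq]
  have := hap.zpow_right q
  rw [SemiconjBy, (hcb.zpow_left p).mul_zpow, ← zpow_mul] at this
  exact this

theorem zpow_mul_zpow_mul_zpow_mul_zpow_of_mul_eq_mul_mul (hca : Commute c a)
    (hcb : Commute c b) (h : a * b = c * b * a) (p q r s : ℤ) :
    a ^ p * b ^ q * (a ^ r * b ^ s) = c ^ (-(q * r)) * (a ^ (p + r) * b ^ (q + s)) := by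
  have hswap : b ^ q * a ^ r = c ^ (-(q * r)) * (a ^ r * b ^ q) := by
    rw [mul_comm q r, zpow_mul_zpow_of_mul_eq_mul_mul hca hcb h, mul_assoc, zpow_neg,
      inv_mul_cancel_left]
  calc a ^ p * b ^ q * (a ^ r * b ^ s) = a ^ p * (b ^ q * a ^ r) * b ^ s := by group
    _ = c ^ (-(q * r)) * (a ^ p * a ^ r * (b ^ q * b ^ s)) := by
      rw [hswap, ← mul_assoc, ← (hca.zpow_zpow _ p).eq]; group
    _ = _ := by rw [zpow_add, zpow_add]
end Group

section ProductToSum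

variable {K A : Type*} [DivInvMonoid K] [NonUnitalNonAssocSemiring A] [DistribSMul K A]

theorem add_mul_add_eq_of_mul_eq_smul {t : K} {E : ℤ → ℤ → A}
    (hE : ∀ p q r s, E p q * E r s = t ^ (p * s - q * r) • E (p + r) (q + s)) (p q r s : ℤ) :
    (E p q + E (-p) (-q)) * (E r s + E (-r) (-s)) =
      t ^ (p * s - q * r) • (E (p + r) (q + s) + E (-(p + r)) (-(q + s))) +
      t ^ (q * r - p * s) • (E (p - r) (q - s) + E (-(p - r)) (-(q - s))) := by
  have hpm : E p q * E (-r) (-s) = t ^ (q * r - p * s) • E (p - r) (q - s) := by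
    rw [hE]; ring_nf
  have hmp : E (-p) (-q) * E r s = t ^ (q * r - p * s) • E (-(p - r)) (-(q - s)) := by
    rw [hE]; ring_nf
  have hmm : E (-p) (-q) * E (-r) (-s) = t ^ (p * s - q * r) • E (-(p + r)) (-(q + s)) := by
    rw [hE]; ring_nf
  rw [add_mul, mul_add, mul_add, hE, hpm, hmp, hmm, smul_add, smul_add]
  abel

end ProductToSum

section QuantumTorus

variable {K A : Type*} [Semifield K] [Semiring A] [Algebra K A]

def noncommExp (t : K) (l m : Aˣ) (p q : ℤ) : A := t ^ (-(p * q)) • ((l ^ p * m ^ q : Aˣ) : A)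

theorem val_map_algebraMap_mk0_zpow {t : K} (ht : t ≠ 0) (n : ℤ) :
    ((Units.map (algebraMap K A : K →* A) (Units.mk0 t ht) ^ n : Aˣ) : A) =
      algebraMap K A (t ^ n) := by
  rw [← map_zpow, Units.coe_map, Units.val_zpow_eq_zpow_val]
  rfl

variable {t : K} {l m : Aˣ}

theorem noncommExp_mul_noncommExp (ht : t ≠ 0) (rel : (l : A) * m = t ^ 2 • ((m : A) * l))
    (p q r s : ℤ) :
    noncommExp t l m p q * noncommExp t l m r s =
      t ^ (p * s - q * r) • noncommExp t l m (p + r) (q + s) := by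
  set τ : Aˣ := Units.map (algebraMap K A : K →* A) (Units.mk0 t ht)
  have hτ : ∀ x : Aˣ, Commute τ x := fun x => Units.ext (Algebra.commutes t (x : A))
  have hlm : l * m = τ ^ (2 : ℤ) * m * l := by
    ext
    rw [Units.val_mul, rel, Units.val_mul, Units.val_mul, val_map_algebraMap_mk0_zpow,
      Algebra.smul_def, mul_assoc, zpow_ofNat]
  have hmul := zpow_mul_zpow_mul_zpow_mul_zpow_of_mul_eq_mul_mul
    ((hτ l).zpow_left 2) ((hτ m).zpow_left 2) hlm p q r s
  rw [← zpow_mul] at hmul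
  simp only [noncommExp, smul_mul_smul_comm, ← Units.val_mul]
  rw [hmul, Units.val_mul, val_map_algebraMap_mk0_zpow, ← Algebra.smul_def, smul_smul,
    smul_smul, ← zpow_add₀ ht, ← zpow_add₀ ht, ← zpow_add₀ ht]
  congr 2
  ring

end QuantumTorus

/-- the product-to-sum formula for the doubled noncommutative
cosines: `C(p,q)·C(r,s) = t^(ps−qr)·C(p+r,q+s) + t^(qr−ps)·C(p−r,q−s)`. -/
theorem cos_product_to_sum (t : ℂ) (ht : t ≠ 0) (A : Type*) [Ring A] [Algebra ℂ A]
    (l m : Aˣ) (rel : (l : A) * (m : A) = t ^ 2 • ((m : A) * (l : A)))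
    (e : ℤ → ℤ → A)
    (he : ∀ p q : ℤ, e p q = t ^ (-(p * q)) • ((l ^ p * m ^ q : Aˣ) : A))
    (Cos : ℤ → ℤ → A)
    (hC : ∀ p q : ℤ, Cos p q = e p q + e (-p) (-q)) :
    ∀ p q r s : ℤ,
      Cos p q * Cos r s =
        t ^ (p * s - q * r) • Cos (p + r) (q + s) +
        t ^ (q * r - p * s) • Cos (p - r) (q - s) := by
  obtain rfl : e = noncommExp t l m := funext₂ he
  simp only [hC]
  exact add_mul_add_eq_of_mul_eq_smul (noncommExp_mul_noncommExp ht rel)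
end

section
/- Noncommutative de Moivre formula: for every natural number n and all integers p, q, one has e(p,q)^n = e(np, nq), and consequently evaluating the dilated Chebyshev polynomial T_n (defined by T_0 = 2, T_1 = X, T_{n+1} = X·T_n − T_{n−1}) at the element C(p,q) ∈ A yields T_n(C(p,q)) = C(np, nq). (This justifies the convention that the skein (np,nq)_T, the (p,q)-curve colored by T_n, corresponds to the cosine C(np,nq).) -/
open Polynomial

/-- The dilated Chebyshev polynomials of the first kind:
`T 0 = 2`, `T 1 = X`, `T (n+2) = X * T (n+1) - T n`. -/
noncomputable def dilChebT : ℕ → Polynomial ℂ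
  | 0 => 2
  | 1 => X
  | n + 2 => X * dilChebT (n + 1) - dilChebT n

/-!
Everything follows from the product rule `e(p,q) e(r,s) = t^(ps - qr) e(p+r, q+s)` of the quantum
torus, itself a consequence of `l^p m^q = t^(2pq) m^q l^p`. The twist `ps - qr` vanishes for
parallel vectors, so `e(p,q)^n = e(np,nq)` and `e(p,q)` is a unit with inverse `e(-p,-q)`.
Then `C(p,q) = u + u⁻¹` for a unit `u`, and `T_n(u + u⁻¹) = u^n + u^(-n)` holds in any ring by the
three-term recurrence, since `u` and `u⁻¹` commute.
-/

section Group

variable {G : Type*} [Group G] {z a b : G}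

theorem mul_zpow_of_mul_eq_mul_mul (hzb : Commute z b) (h : a * b = z * (b * a)) (n : ℤ) :
    a * b ^ n = z ^ n * (b ^ n * a) := by
  have hsemiconj : SemiconjBy a b (z * b) := by rw [SemiconjBy, h, mul_assoc]
  rw [← mul_assoc, ← hzb.mul_zpow]
  exact hsemiconj.zpow_right n

theorem zpow_mul_zpow_of_mul_eq_mul_mul_s2 (hza : Commute z a) (hzb : Commute z b)
    (h : a * b = z * (b * a)) (m n : ℤ) : a ^ m * b ^ n = z ^ (m * n) * (b ^ n * a ^ m) := by
  have hba : b * a = z⁻¹ * (a * b) := by rw [h]; group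
  have ham : a ^ m * b = z ^ m * (b * a ^ m) := by
    rw [mul_zpow_of_mul_eq_mul_mul hza.inv_left hba m]; group
  rw [mul_zpow_of_mul_eq_mul_mul (hzb.zpow_left m) ham n, zpow_mul]

end Group

section Algebra

variable {k A : Type*} [Field k] [Ring A] [Algebra k A]

theorem Units.val_zpow_mul_val_zpow_of_mul_eq_smul {c : k} (hc : c ≠ 0) {a b : Aˣ}
    (h : (a : A) * b = c • ((b : A) * a)) (m n : ℤ) :
    ((a ^ m : Aˣ) : A) * ((b ^ n : Aˣ) : A) =
      c ^ (m * n) • (((b ^ n : Aˣ) : A) * ((a ^ m : Aˣ) : A)) := by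
  set z : Aˣ := Units.map (algebraMap k A : k →* A) (Units.mk0 c hc)
  have hz_central (x : Aˣ) : Commute z x := Units.ext (Algebra.commutes c (x : A))
  have hz_zpow (j : ℤ) : ((z ^ j : Aˣ) : A) = algebraMap k A (c ^ j) := by
    simp [z, ← map_zpow, Units.val_zpow_eq_zpow_val]
  have hab : a * b = z * (b * a) := Units.ext (by simp [z, h, Algebra.smul_def])
  have := congrArg Units.val
    (zpow_mul_zpow_of_mul_eq_mul_mul_s2 (hz_central a) (hz_central b) hab m n)
  rwa [Units.val_mul, Units.val_mul, hz_zpow, ← Algebra.smul_def] at this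

/-- The noncommutative exponential `e(p,q)`. -/
noncomputable def ncExp (t : k) (l m : Aˣ) (p q : ℤ) : A :=
  t ^ (-(p * q)) • ((l ^ p * m ^ q : Aˣ) : A)

variable {t : k} {l m : Aˣ}

@[simp]
theorem ncExp_zero_zero : ncExp t l m 0 0 = 1 := by
  simp [ncExp]

theorem ncExp_mul_ncExp (ht : t ≠ 0) (hlm : (l : A) * m = t ^ 2 • ((m : A) * l))
    (p q r s : ℤ) :
    ncExp t l m p q * ncExp t l m r s = t ^ (p * s - q * r) • ncExp t l m (p + r) (q + s) := by
  have hcomm := Units.val_zpow_mul_val_zpow_of_mul_eq_smul (pow_ne_zero 2 ht) hlm r q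
  simp only [ncExp, zpow_add, Units.val_mul, mul_assoc, ← mul_assoc ((l ^ r : Aˣ) : A), hcomm]
  simp only [smul_mul_assoc, mul_smul_comm, smul_smul, mul_assoc]
  congr 1
  simp only [← zpow_natCast, ← zpow_mul, ← zpow_add₀ ht]
  ring_nf

theorem ncExp_mul_ncExp_of_mul_eq_mul (ht : t ≠ 0) (hlm : (l : A) * m = t ^ 2 • ((m : A) * l))
    {p q r s : ℤ} (h : p * s = q * r) :
    ncExp t l m p q * ncExp t l m r s = ncExp t l m (p + r) (q + s) := by
  rw [ncExp_mul_ncExp ht hlm, sub_eq_zero.2 h, zpow_zero, one_smul]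

theorem ncExp_pow (ht : t ≠ 0) (hlm : (l : A) * m = t ^ 2 • ((m : A) * l))
    (n : ℕ) (p q : ℤ) :
    ncExp t l m p q ^ n = ncExp t l m (n * p) (n * q) := by
  induction n with
  | zero => simp
  | succ n ih =>
    rw [pow_succ, ih, ncExp_mul_ncExp_of_mul_eq_mul ht hlm (by ring)]
    push_cast
    ring_nf

theorem ncExp_mul_ncExp_neg (ht : t ≠ 0) (hlm : (l : A) * m = t ^ 2 • ((m : A) * l))
    (p q : ℤ) :
    ncExp t l m p q * ncExp t l m (-p) (-q) = 1 := by
  rw [ncExp_mul_ncExp_of_mul_eq_mul ht hlm (by ring), add_neg_cancel, add_neg_cancel,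
    ncExp_zero_zero]

end Algebra

theorem aeval_add_dilChebT {A : Type*} [Ring A] [Algebra ℂ A] {u v : A} (huv : u * v = 1)
    (hvu : v * u = 1) :
    ∀ n : ℕ, aeval (u + v) (dilChebT n) = u ^ n + v ^ n
  | 0 => by rw [dilChebT, map_ofNat, pow_zero, pow_zero, one_add_one_eq_two]
  | 1 => by simp [dilChebT]
  | n + 2 => by
    have hu : u * v ^ (n + 1) = v ^ n := by rw [pow_succ', ← mul_assoc, huv, one_mul]
    have hv : v * u ^ (n + 1) = u ^ n := by rw [pow_succ', ← mul_assoc, hvu, one_mul]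
    rw [dilChebT, map_sub, map_mul, aeval_X, aeval_add_dilChebT huv hvu (n + 1),
      aeval_add_dilChebT huv hvu n, add_mul, mul_add, mul_add, hu, hv, ← pow_succ', ← pow_succ']
    abel

/-- noncommutative de Moivre formula: `e(p,q)^n = e(np,nq)`, and
consequently `T_n(C(p,q)) = C(np,nq)`. -/
theorem de_moivre (t : ℂ) (ht : t ≠ 0) (A : Type*) [Ring A] [Algebra ℂ A]
    (l m : Aˣ) (rel : (l : A) * (m : A) = t ^ 2 • ((m : A) * (l : A)))
    (e : ℤ → ℤ → A)
    (he : ∀ p q : ℤ, e p q = t ^ (-(p * q)) • ((l ^ p * m ^ q : Aˣ) : A))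
    (Cos : ℤ → ℤ → A)
    (hC : ∀ p q : ℤ, Cos p q = e p q + e (-p) (-q)) :
    ∀ (n : ℕ) (p q : ℤ),
      e p q ^ n = e ((n : ℤ) * p) ((n : ℤ) * q) ∧
      Polynomial.aeval (Cos p q) (dilChebT n) = Cos ((n : ℤ) * p) ((n : ℤ) * q) := by
  obtain rfl : e = ncExp t l m := funext₂ he
  intro n p q
  refine ⟨ncExp_pow ht rel n p q, ?_⟩
  have hinv := ncExp_mul_ncExp_neg ht rel (-p) (-q)
  rw [neg_neg, neg_neg] at hinv
  rw [hC, hC, aeval_add_dilChebT (ncExp_mul_ncExp_neg ht rel p q) hinv, ncExp_pow ht rel,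
    ncExp_pow ht rel, mul_neg, mul_neg]
end

section
/- Contraction of the first generator of the peripheral ideal of the left-handed trefoil to the quantum plane: let E := t^5·(l·m^(−5) + l^(−1)·m^5) − t^(−7)·(l·m^(−1) + l^(−1)·m) + t^(−3)·(m^5 + m^(−5)) − t·(m + m^(−1)) ∈ A (the image in the noncommutative torus of the skein (1,−5)_T − t^(−8)(1,−1)_T + t^(−3)(0,5)_T − t(0,1)_T). Then t^(11)·m^5·l·E = t^(−4)·l^2 + t^(16)·m^(10) − t^(−16)·l^2·m^4 − t^4·m^6 + t^(−2)·l·m^(10) + t^(−2)·l − t^2·l·m^6 − t^2·l·m^4, an element of the quantum plane (containing no negative powers of l or m). -/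
/-- contraction of the first generator of the peripheral ideal of
the left-handed trefoil to the quantum plane: with
`E = t^5(l m^(-5) + l^(-1) m^5) − t^(-7)(l m^(-1) + l^(-1) m) + t^(-3)(m^5 + m^(-5)) − t(m + m^(-1))`,
one has
`t^11 m^5 l E = t^(-4) l^2 + t^16 m^10 − t^(-16) l^2 m^4 − t^4 m^6 + t^(-2) l m^10 + t^(-2) l − t^2 l m^6 − t^2 l m^4`. -/
theorem left_trefoil_contraction (t : ℂ) (ht : t ≠ 0) (A : Type*) [Ring A] [Algebra ℂ A]
    (l m : Aˣ) (rel : (l : A) * (m : A) = t ^ 2 • ((m : A) * (l : A)))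
    (E : A)
    (hE : E = t ^ (5 : ℤ) • ((l : A) * ((m ^ (-5 : ℤ) : Aˣ) : A) + ((l⁻¹ : Aˣ) : A) * ((m ^ (5 : ℤ) : Aˣ) : A))
        - t ^ (-7 : ℤ) • ((l : A) * ((m⁻¹ : Aˣ) : A) + ((l⁻¹ : Aˣ) : A) * (m : A))
        + t ^ (-3 : ℤ) • (((m ^ (5 : ℤ) : Aˣ) : A) + ((m ^ (-5 : ℤ) : Aˣ) : A))
        - t • ((m : A) + ((m⁻¹ : Aˣ) : A))) :
    t ^ (11 : ℤ) • ((m : A) ^ 5 * (l : A) * E) =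
      t ^ (-4 : ℤ) • ((l : A) ^ 2)
      + t ^ (16 : ℤ) • ((m : A) ^ 10)
      - t ^ (-16 : ℤ) • ((l : A) ^ 2 * (m : A) ^ 4)
      - t ^ (4 : ℤ) • ((m : A) ^ 6)
      + t ^ (-2 : ℤ) • ((l : A) * (m : A) ^ 10)
      + t ^ (-2 : ℤ) • (l : A)
      - t ^ (2 : ℤ) • ((l : A) * (m : A) ^ 6)
      - t ^ (2 : ℤ) • ((l : A) * (m : A) ^ 4) := by
  subst hE
  have hm5 : ((m ^ (5:ℤ) : Aˣ) : A) = (m:A)^5 := by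
    rw [zpow_ofNat]; exact Units.val_pow_eq_pow_val m 5
  have hm5' : ((m ^ (-5:ℤ) : Aˣ) : A) = ((m⁻¹:Aˣ):A)^5 := by
    have h : (m ^ (-5:ℤ) : Aˣ) = (m⁻¹)^(5:ℕ) := by
      rw [inv_pow, ← zpow_ofNat, ← zpow_neg]
    rw [h]; exact Units.val_pow_eq_pow_val m⁻¹ 5
  have hML : ∀ x : A, (m:A) * ((l:A) * x) = t^(-2:ℤ) • ((l:A) * ((m:A) * x)) := by
    intro x
    have base : (m:A) * (l:A) = t^(-2:ℤ) • ((l:A) * (m:A)) := by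
      rw [rel, smul_smul]
      have h1 : t^(-2:ℤ) * t^2 = 1 := by
        rw [← zpow_natCast t 2, ← zpow_add₀ ht]; norm_num
      rw [h1, one_smul]
    rw [← mul_assoc, base, smul_mul_assoc, mul_assoc]
  have hML0 : (m:A) * (l:A) = t^(-2:ℤ) • ((l:A) * (m:A)) := by
    have := hML 1; simpa using this
  have hMMi : ∀ x : A, (m:A) * (((m⁻¹:Aˣ):A) * x) = x := fun x => by
    rw [← mul_assoc, Units.mul_inv, one_mul]
  have hMiM : ∀ x : A, ((m⁻¹:Aˣ):A) * ((m:A) * x) = x := fun x => by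
    rw [← mul_assoc, Units.inv_mul, one_mul]
  have hLLi : ∀ x : A, (l:A) * (((l⁻¹:Aˣ):A) * x) = x := fun x => by
    rw [← mul_assoc, Units.mul_inv, one_mul]
  have hMMi0 : (m:A) * ((m⁻¹:Aˣ):A) = 1 := Units.mul_inv m
  have hLLi0 : (l:A) * ((l⁻¹:Aˣ):A) = 1 := Units.mul_inv l
  have base2 : (m:A) * ((l⁻¹:Aˣ):A) = t^(2:ℤ) • (((l⁻¹:Aˣ):A) * (m:A)) := by
    have step : ((l⁻¹:Aˣ):A) * (m:A) = t^(-2:ℤ) • ((m:A) * ((l⁻¹:Aˣ):A)) := by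
      conv_lhs => rw [show (m:A) = (m:A)*(l:A)*((l⁻¹:Aˣ):A) from by
        rw [mul_assoc, Units.mul_inv, mul_one]]
      rw [hML0, smul_mul_assoc, mul_smul_comm, ← mul_assoc, ← mul_assoc, Units.inv_mul, one_mul]
    rw [step, smul_smul]
    have h1 : t^(2:ℤ) * t^(-2:ℤ) = 1 := by
      rw [← zpow_add₀ ht]; norm_num
    rw [h1, one_smul]
  have hMLi : ∀ x : A, (m:A) * (((l⁻¹:Aˣ):A) * x) = t^(2:ℤ) • (((l⁻¹:Aˣ):A) * ((m:A) * x)) := by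
    intro x
    rw [← mul_assoc, base2, smul_mul_assoc, mul_assoc]
  have pl2 : (l:A)^2 = (l:A)*(l:A) := by norm_num [pow_succ, mul_assoc]
  have pm4 : (m:A)^4 = (m:A)*((m:A)*((m:A)*(m:A))) := by norm_num [pow_succ, mul_assoc]
  have pm5 : (m:A)^5 = (m:A)*((m:A)*((m:A)*((m:A)*(m:A)))) := by norm_num [pow_succ, mul_assoc]
  have pm6 : (m:A)^6 = (m:A)*((m:A)*((m:A)*((m:A)*((m:A)*(m:A))))) := by norm_num [pow_succ, mul_assoc]
  have pm10 : (m:A)^10 = (m:A)*((m:A)*((m:A)*((m:A)*((m:A)*((m:A)*((m:A)*((m:A)*((m:A)*(m:A))))))))) := by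
    norm_num [pow_succ, mul_assoc]
  have pmi5 : ((m⁻¹:Aˣ):A)^5 = ((m⁻¹:Aˣ):A)*(((m⁻¹:Aˣ):A)*(((m⁻¹:Aˣ):A)*(((m⁻¹:Aˣ):A)*((m⁻¹:Aˣ):A)))) := by
    norm_num [pow_succ, mul_assoc]
  simp only [hm5, hm5', pl2, pm4, pm5, pm6, pm10, pmi5, mul_add, mul_sub, smul_add, smul_sub,
    mul_smul_comm, smul_mul_assoc, smul_smul, mul_assoc, hML, hMMi, hMiM, hLLi, hML0, hMLi,
    hMMi0, hLLi0, mul_one, one_mul]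
  match_scalars <;>
    (simp only [mul_one, ← zpow_natCast t, Nat.cast_ofNat, ← zpow_add₀ ht, ← zpow_add_one₀ ht,
      ← zpow_one_add₀ ht]; norm_num)
end

section
/- Factorization of the contracted generator (Theorem 3 of the paper, corrected sign): in A one has the identity (m^4·(l + t^(10)) − t^(−4)·(l + t^2))·(l − t^6·m^6) = −( t^(−4)·l^2 + t^(16)·m^(10) − t^(−16)·l^2·m^4 − t^4·m^6 + t^(−2)·l·m^(10) + t^(−2)·l − t^2·l·m^6 − t^2·l·m^4 ). In particular the displayed degree-ten expression, which is the contraction to the quantum plane of the first generator of the peripheral ideal of the left-handed trefoil, factors with right factor (l − t^6·m^6), up to an overall sign. -/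
/-- factorization of the contracted generator (Theorem 3 of the
paper, corrected sign): in the quantum plane,
`(m^4(l + t^10) − t^(-4)(l + t^2))(l − t^6 m^6)`
equals the negative of the degree-ten contraction of the first generator of the
peripheral ideal of the left-handed trefoil. -/
theorem left_trefoil_factorization (t : ℂ) (ht : t ≠ 0) (A : Type*) [Ring A] [Algebra ℂ A]
    (l m : A) (rel : l * m = t ^ 2 • (m * l)) :
    (m ^ 4 * (l + t ^ (10 : ℤ) • (1 : A)) - t ^ (-4 : ℤ) • (l + t ^ (2 : ℤ) • (1 : A)))
      * (l - t ^ (6 : ℤ) • m ^ 6) =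
    -(t ^ (-4 : ℤ) • (l ^ 2)
      + t ^ (16 : ℤ) • (m ^ 10)
      - t ^ (-16 : ℤ) • (l ^ 2 * m ^ 4)
      - t ^ (4 : ℤ) • (m ^ 6)
      + t ^ (-2 : ℤ) • (l * m ^ 10)
      + t ^ (-2 : ℤ) • l
      - t ^ (2 : ℤ) • (l * m ^ 6)
      - t ^ (2 : ℤ) • (l * m ^ 4)) := by
  have ht2 : (t ^ 2 : ℂ) ≠ 0 := pow_ne_zero 2 ht
  have hm : m * l = ((t ^ 2 : ℂ))⁻¹ • (l * m) := by
    rw [rel, smul_smul, inv_mul_cancel₀ ht2, one_smul]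
  have hk : ∀ k : ℕ, m ^ k * l = (((t ^ 2 : ℂ))⁻¹) ^ k • (l * m ^ k) := by
    intro k
    induction k with
    | zero => simp
    | succ n ih =>
      rw [pow_succ, mul_assoc, hm, mul_smul_comm, ← mul_assoc, ih, smul_mul_assoc,
        smul_smul, mul_assoc, ← pow_succ, ← pow_succ']
  have hC : m ^ 4 * l = (((t ^ 2 : ℂ))⁻¹) ^ 4 • (l * m ^ 4) := hk 4
  have hA : m ^ 4 * l * l = (((t ^ 2 : ℂ))⁻¹) ^ 8 • (l ^ 2 * m ^ 4) := by
    rw [hC, smul_mul_assoc, mul_assoc, hk 4, mul_smul_comm, smul_smul, ← mul_assoc,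
      ← pow_two]
    congr 1
    · ring
    · rw [pow_two]
  have hB : m ^ 4 * l * m ^ 6 = (((t ^ 2 : ℂ))⁻¹) ^ 4 • (l * m ^ 10) := by
    rw [hC, smul_mul_assoc, mul_assoc, ← pow_add]
  simp only [sub_mul, mul_sub, add_mul, mul_add, smul_mul_assoc, mul_smul_comm,
    mul_one, one_mul, smul_smul, ← mul_assoc]
  rw [hA, hB, hC]
  simp only [← sq, ← pow_add]
  norm_num
  match_scalars <;> (try field_simp; try ring)
end
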